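/- Symmetry conditions imply symplecticity of the potential-flow Jacobian: let the (2D+4D²)×(2D+4D²) real matrix Φ = I - t·N, where N is the block matrix with rows and columns indexed by (q, p, Q⁽¹⁾, P⁽¹⁾, Q⁽²⁾, P⁽²⁾) whose only nonzero blocks are N_{p,q} = a, N_{p,Q⁽ʳ⁾} = b⁽ʳ⁾, N_{P⁽ʳ⁾,q} = c⁽ʳ⁾, N_{P⁽ʳ⁾,Q⁽ˢ⁾} = d⁽ʳˢ⁾ (r,s ∈ {1,2}). Let ω be the block-diagonal matrix diag(J_{2D}, (ℏ/2)J_{2D²}, (ℏ/2)J_{2D²}). If aᵀ = a, (b⁽ʳ⁾)ᵀ = (ℏ/2)c⁽ʳ⁾ for r = 1,2, and (d⁽ʳˢ⁾)ᵀ = d⁽ˢʳ⁾ for all r,s ∈ {1,2}, then Φᵀ·ω·Φ = ω. -/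
import Mathlib

open Matrix

private lemma expand_aux {n : Type*} [Fintype n] [DecidableEq n] (t : ℝ) (ω N : Matrix n n ℝ) :
    (1 - t•N)ᵀ * ω * (1 - t•N) = ω - t•(Nᵀ*ω) - t•(ω*N) + (t*t)•(Nᵀ*(ω*N)) := by
  simp only [Matrix.transpose_sub, Matrix.transpose_smul, Matrix.transpose_one,
    Matrix.sub_mul, Matrix.mul_sub, Matrix.one_mul, Matrix.mul_one,
    Matrix.smul_mul, Matrix.mul_smul, smul_smul, smul_sub, smul_add, Matrix.mul_assoc]
  abel


open Matrix

/-- Canonical `2n×2n` symplectic matrix `[[0, I],[-I, 0]]` over index type `γ ⊕ γ`. -/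
def Jmat (γ : Type*) [Fintype γ] [DecidableEq γ] : Matrix (γ ⊕ γ) (γ ⊕ γ) ℝ :=
  Matrix.fromBlocks 0 1 (-1) 0

/-- The Jacobian matrix `N` of the potential flow of the local cubic variational GWD,
with block rows/columns indexed by `(q, p, Q⁽¹⁾, P⁽¹⁾, Q⁽²⁾, P⁽²⁾)`; only the
`p`-row blocks `(a, 0, b⁽¹⁾, 0, b⁽²⁾, 0)` and `P⁽ʳ⁾`-row blocks
`(c⁽ʳ⁾, 0, d⁽ʳ¹⁾, 0, d⁽ʳ²⁾, 0)` are nonzero. -/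
def Nmat {D : ℕ}
    (a : Matrix (Fin D) (Fin D) ℝ)
    (b1 b2 : Matrix (Fin D) (Fin D × Fin D) ℝ)
    (c1 c2 : Matrix (Fin D × Fin D) (Fin D) ℝ)
    (d11 d12 d21 d22 : Matrix (Fin D × Fin D) (Fin D × Fin D) ℝ) :
    Matrix ((Fin D ⊕ Fin D) ⊕ (((Fin D × Fin D) ⊕ (Fin D × Fin D)) ⊕
            ((Fin D × Fin D) ⊕ (Fin D × Fin D))))
           ((Fin D ⊕ Fin D) ⊕ (((Fin D × Fin D) ⊕ (Fin D × Fin D)) ⊕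
            ((Fin D × Fin D) ⊕ (Fin D × Fin D)))) ℝ :=
  fun i j => match i, j with
  | Sum.inl (Sum.inr p), Sum.inl (Sum.inl q) => a p q
  | Sum.inl (Sum.inr p), Sum.inr (Sum.inl (Sum.inl k)) => b1 p k
  | Sum.inl (Sum.inr p), Sum.inr (Sum.inr (Sum.inl k)) => b2 p k
  | Sum.inr (Sum.inl (Sum.inr P)), Sum.inl (Sum.inl q) => c1 P q
  | Sum.inr (Sum.inl (Sum.inr P)), Sum.inr (Sum.inl (Sum.inl k)) => d11 P k
  | Sum.inr (Sum.inl (Sum.inr P)), Sum.inr (Sum.inr (Sum.inl k)) => d12 P k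
  | Sum.inr (Sum.inr (Sum.inr P)), Sum.inl (Sum.inl q) => c2 P q
  | Sum.inr (Sum.inr (Sum.inr P)), Sum.inr (Sum.inl (Sum.inl k)) => d21 P k
  | Sum.inr (Sum.inr (Sum.inr P)), Sum.inr (Sum.inr (Sum.inl k)) => d22 P k
  | _, _ => 0

set_option maxHeartbeats 2000000 in
/-- Symmetry conditions imply symplecticity of the potential-flow Jacobian
`Φ = I - t·N` with respect to the block-diagonal symplectic form
`ω = diag(J_{2D}, (ℏ/2)J_{2D²}, (ℏ/2)J_{2D²})`. -/
theorem potential_flow_jacobian_symplectic (D : ℕ) (hD : 0 < D)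
    (ℏ t : ℝ) (hℏ : 0 < ℏ)
    (a : Matrix (Fin D) (Fin D) ℝ)
    (b1 b2 : Matrix (Fin D) (Fin D × Fin D) ℝ)
    (c1 c2 : Matrix (Fin D × Fin D) (Fin D) ℝ)
    (d11 d12 d21 d22 : Matrix (Fin D × Fin D) (Fin D × Fin D) ℝ)
    (ha : aᵀ = a)
    (hb1 : b1ᵀ = (ℏ/2) • c1) (hb2 : b2ᵀ = (ℏ/2) • c2)
    (hd11 : d11ᵀ = d11) (hd22 : d22ᵀ = d22)
    (hd12 : d12ᵀ = d21) :
    let ω := Matrix.fromBlocks (Jmat (Fin D)) 0 0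
      (Matrix.fromBlocks ((ℏ/2) • Jmat (Fin D × Fin D)) 0 0
        ((ℏ/2) • Jmat (Fin D × Fin D)))
    let Φ := 1 - t • Nmat a b1 b2 c1 c2 d11 d12 d21 d22
    Φᵀ * ω * Φ = ω := by
  intro ω Φ
  have ha' : ∀ i j, a i j = a j i := fun i j => by
    simpa using congrFun (congrFun ha j) i
  have hb1' : ∀ p k, b1 p k = ℏ/2 * c1 k p := fun p k => by
    simpa using congrFun (congrFun hb1 k) p
  have hb2' : ∀ p k, b2 p k = ℏ/2 * c2 k p := fun p k => by
    simpa using congrFun (congrFun hb2 k) p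
  have hd11' : ∀ i j, d11 i j = d11 j i := fun i j => by
    simpa using congrFun (congrFun hd11 j) i
  have hd22' : ∀ i j, d22 i j = d22 j i := fun i j => by
    simpa using congrFun (congrFun hd22 j) i
  have hd12' : ∀ i j, d12 i j = d21 j i := fun i j => by
    simpa using congrFun (congrFun hd12 j) i
  set N := Nmat a b1 b2 c1 c2 d11 d12 d21 d22 with hN
  have hlin : Nᵀ * ω = -(ω * N) := by
    ext i j
    rcases i with (i|i)|((i|i)|(i|i)) <;> rcases j with (j|j)|((j|j)|(j|j)) <;>
      simp [hN, ω, Nmat, Jmat, Matrix.mul_apply, Fintype.sum_sum_type, Matrix.one_apply] <;>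
      first
        | linear_combination ha' i j
        | linear_combination ha' j i
        | linear_combination -hb1' i j
        | linear_combination hb1' j i
        | linear_combination -hb2' i j
        | linear_combination hb2' j i
        | linear_combination (ℏ/2) * hd11' i j
        | linear_combination -(ℏ/2) * hd11' i j
        | linear_combination (ℏ/2) * hd22' i j
        | linear_combination -(ℏ/2) * hd22' i j
        | linear_combination (ℏ/2) * hd12' i j
        | linear_combination -(ℏ/2) * hd12' i j
        | linear_combination (ℏ/2) * hd12' j i
        | linear_combination -(ℏ/2) * hd12' j i
  have hquad : Nᵀ * (ω * N) = 0 := by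
    ext i j
    rcases i with (i|i)|((i|i)|(i|i)) <;> rcases j with (j|j)|((j|j)|(j|j)) <;>
      simp [hN, ω, Nmat, Jmat, Matrix.mul_apply, Fintype.sum_sum_type, Matrix.one_apply]
  have hΦ : Φ = 1 - t • N := rfl
  rw [hΦ, expand_aux, hlin, hquad]
  simp
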